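/- Let A be an algebra with a term t Mal'cev modulo F and G. Then for n ≥ 2 and reflexive admissible relations R₁, …, Rₙ on A: R₁ ∘ R₂ ∘ ⋯ ∘ Rₙ ⊆ F(R₁) ∘ cl(F(R₁) ∪ F(R₂)) ∘ cl(F(R₁) ∪ F(R₂) ∪ F(R₃)) ∘ ⋯ ∘ cl(F(R₁) ∪ ⋯ ∪ F(R_{n−1})) ∘ cl(R₁ ∪ ⋯ ∪ Rₙ) ∘ cl(G(R₂) ∪ ⋯ ∪ G(Rₙ)) ∘ cl(G(R₃) ∪ ⋯ ∪ G(Rₙ)) ∘ ⋯ ∘ cl(G(R_{n−1}) ∪ G(Rₙ)) ∘ G(Rₙ), where cl(X) is the least compatible relation containing X. -/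

import Mathlib

structure Signature where
  symbols : Type
  arity : symbols → ℕ

structure UAAlgebra (σ : Signature) where
  carrier : Type
  ops : ∀ s, (Fin (σ.arity s) → carrier) → carrier

namespace Paper

variable {σ : Signature}

/-- Binary relations on the carrier of an algebra. -/
abbrev Rel (A : UAAlgebra σ) := A.carrier → A.carrier → Prop

/-- A relation is admissible (compatible) if it is preserved by all operations,
i.e. it is a subalgebra of `A × A`. -/
def Compatible (A : UAAlgebra σ) (R : Rel A) : Prop :=
  ∀ s (f g : Fin (σ.arity s) → A.carrier),
    (∀ j, R (f j) (g j)) → R (A.ops s f) (A.ops s g)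

/-- Reflexive and admissible. -/
def RAdm (A : UAAlgebra σ) (R : Rel A) : Prop :=
  Reflexive R ∧ Compatible A R

/-- Relational composition. -/
def comp {A : UAAlgebra σ} (R S : Rel A) : Rel A :=
  fun a c => ∃ b, R a b ∧ S b c

/-- `cl A X` : the least compatible relation containing `X`. -/
def cl (A : UAAlgebra σ) (X : Rel A) : Rel A :=
  fun a b => ∀ S : Rel A, Compatible A S → (∀ x y, X x y → S x y) → S a b

/-- The least reflexive compatible relation containing `X`. -/
def clRefl (A : UAAlgebra σ) (X : Rel A) : Rel A :=
  fun a b => ∀ S : Rel A, Reflexive S → Compatible A S → (∀ x y, X x y → S x y) → S a b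

/-- `altComp R S n` is `R ∘ₙ S`, the alternating composition
`R ∘ S ∘ R ∘ ⋯` with `n` factors (`n - 1` occurrences of `∘`);
by convention `R ∘₀ S` is the identity relation. -/
def altComp {A : UAAlgebra σ} (R S : Rel A) : ℕ → Rel A
  | 0 => Eq
  | n + 1 => comp R (altComp S R n)

/-- `relPow R n = Rⁿ`, with `R⁰` the identity relation. -/
def relPow {A : UAAlgebra σ} (R : Rel A) : ℕ → Rel A
  | 0 => Eq
  | n + 1 => comp R (relPow R n)

/-- The join `R + S = ⋃ₙ R ∘ₙ S`. -/
def join {A : UAAlgebra σ} (R S : Rel A) : Rel A :=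
  fun a b => ∃ n, altComp R S n a b

/-- Converse relation `R⁻`. -/
def conv {A : UAAlgebra σ} (R : Rel A) : Rel A :=
  fun a b => R b a

/-- Composition of a finite list of relations (empty list gives the identity). -/
def compList {A : UAAlgebra σ} : List (Rel A) → Rel A
  | [] => Eq
  | r :: l => comp r (compList l)

/-- Join of a family of relations: the union of all finite compositions of members. -/
def joinFam {A : UAAlgebra σ} {ι : Type} (R : ι → Rel A) : Rel A :=
  fun a b => ∃ l : List ι, compList (l.map R) a b

/-- The smallest congruence containing `X`. -/
def cg (A : UAAlgebra σ) (X : Rel A) : Rel A :=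
  fun a b => ∀ S : Rel A, Equivalence S → Compatible A S →
    (∀ x y, X x y → S x y) → S a b

/-- Terms of the signature `σ` in `n` variables. -/
inductive Term (σ : Signature) (n : ℕ) : Type
  | var : Fin n → Term σ n
  | op : ∀ s, (Fin (σ.arity s) → Term σ n) → Term σ n

/-- Evaluation of a term in an algebra under an environment. -/
def Term.eval {n : ℕ} (A : UAAlgebra σ) (env : Fin n → A.carrier) : Term σ n → A.carrier
  | .var k => env k
  | .op s args => A.ops s fun j => (args j).eval A env

/-- The ternary term operation induced by a ternary term. -/
def tApp (A : UAAlgebra σ) (t : Term σ 3) (a b c : A.carrier) : A.carrier :=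
  t.eval A ![a, b, c]

/-- `t` is Mal'cev modulo `F` and `G`: whenever `a R b` with `R` reflexive admissible,
`a F(R) t(a,b,b)` and `t(a,a,b) G(R) b`. -/
def MalcevMod (A : UAAlgebra σ) (F G : Rel A → Rel A) (t : Term σ 3) : Prop :=
  ∀ R : Rel A, RAdm A R → ∀ a b : A.carrier, R a b →
    F R a (tApp A t a b b) ∧ G R (tApp A t a a b) b

end Paper

/-!
Take a chain `a = b₀ R₁ b₁ ⋯ Rₙ bₙ = c`. Iterating `t` along it gives triangular arrays
`u (r+2) j = t(u (r+1) j, u r (j+1), u (r+1) (j+1))`, and a compatible relation holding between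
the two bottom rows of two such arrays over a window of columns also holds at the apex above that
window. Starting from the rows `b, b`, the second row is `t(b_j, b_{j+1}, b_{j+1})`, related to
`b_j` by `F(R_{j+1})`; so the array climbs from `a` by `F`-steps, each comparing it with its own
shift by one row. Starting from `b, b ∘ succ` it descends to `c` by `G`-steps in the same way.
The two apexes over the whole chain are related by the compatible closure of the `Rᵢ`, since their
bottom rows are related by the `Rᵢ` and by equality.
-/

namespace Paper

variable {σ : Signature} {A : UAAlgebra σ}

theorem Compatible.term_eval {S : Rel A} (hS : Compatible A S) {m : ℕ} (tm : Term σ m)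
    {e e' : Fin m → A.carrier} (h : ∀ k, S (e k) (e' k)) : S (tm.eval A e) (tm.eval A e') := by
  induction tm with
  | var k => exact h k
  | op s args ih => exact hS s _ _ ih

theorem Compatible.tApp {S : Rel A} (hS : Compatible A S) (t : Term σ 3)
    {x x' y y' z z' : A.carrier} (hx : S x x') (hy : S y y') (hz : S z z') :
    S (tApp A t x y z) (tApp A t x' y' z') :=
  hS.term_eval t fun k => by fin_cases k <;> assumption

theorem cl_compatible (X : Rel A) : Compatible A (cl A X) :=
  fun s f g h S hS hXS => hS s f g fun j => h j S hS hXS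

theorem cl_of_rel {X : Rel A} {x y : A.carrier} (h : X x y) : cl A X x y :=
  fun _ _ hXS => hXS x y h

theorem cl_refl {X : Rel A} (hX : ∀ x, X x x) (x : A.carrier) : cl A X x x :=
  cl_of_rel (hX x)

theorem compList_append_of_comp {l₁ l₂ : List (Rel A)} {x z : A.carrier}
    (h : comp (compList l₁) (compList l₂) x z) : compList (l₁ ++ l₂) x z := by
  induction l₁ generalizing x with
  | nil =>
    obtain ⟨y, rfl, h₂⟩ := h
    exact h₂
  | cons r l ih =>
    obtain ⟨y, ⟨w, hxw, hwy⟩, h₂⟩ := h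
    exact ⟨w, hxw, ih ⟨y, hwy, h₂⟩⟩

theorem compList_map_range_of_chain (S : ℕ → Rel A) (x : ℕ → A.carrier) :
    ∀ m, (∀ k < m, S k (x k) (x (k + 1))) → compList ((List.range m).map S) (x 0) (x m)
  | 0, _ => rfl
  | m + 1, h => by
    rw [List.range_succ, List.map_append]
    exact compList_append_of_comp
      ⟨x m, compList_map_range_of_chain S x m fun k hk => h k (by omega),
        x (m + 1), h m m.lt_succ_self, rfl⟩

theorem exists_chain_of_compList :
    ∀ (n : ℕ) (R : Fin n → Rel A) (a c : A.carrier), compList (List.ofFn R) a c →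
      ∃ B : ℕ → A.carrier, B 0 = a ∧ B n = c ∧
        ∀ i (h : i < n), R ⟨i, h⟩ (B i) (B (i + 1))
  | 0, _, a, _, rfl => ⟨fun _ => a, rfl, rfl, fun _ h => absurd h (Nat.not_lt_zero _)⟩
  | n + 1, R, a, c, h => by
    rw [List.ofFn_succ] at h
    obtain ⟨b, hab, hbc⟩ := h
    obtain ⟨B, rfl, hBn, hB⟩ := exists_chain_of_compList n (fun i => R i.succ) _ c hbc
    refine ⟨fun | 0 => a | i + 1 => B i, rfl, hBn, ?_⟩
    rintro (_ | i) hi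
    · exact hab
    · exact hB i (by omega)

variable (t : Term σ 3)

def IsTower (u : ℕ → ℕ → A.carrier) : Prop :=
  ∀ r j, u (r + 2) j = tApp A t (u (r + 1) j) (u r (j + 1)) (u (r + 1) (j + 1))

def tower (c b : ℕ → A.carrier) : ℕ → ℕ → A.carrier
  | 0, j => c j
  | 1, j => b j
  | r + 2, j => tApp A t (tower c b (r + 1) j) (tower c b r (j + 1)) (tower c b (r + 1) (j + 1))

variable {t}

theorem isTower_tower (c b : ℕ → A.carrier) : IsTower t (tower t c b) :=
  fun _ _ => rfl

theorem IsTower.succ_row {u : ℕ → ℕ → A.carrier} (hu : IsTower t u) :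
    IsTower t fun r j => u (r + 1) j :=
  fun r j => hu (r + 1) j

theorem IsTower.succ_col {u : ℕ → ℕ → A.carrier} (hu : IsTower t u) :
    IsTower t fun r j => u r (j + 1) :=
  fun r j => hu r (j + 1)

/-- Entry `(r + 1, j)` only depends on row `1` over columns `j, …, j + r` and on row `0` over
columns `j + 1, …, j + r`. -/
theorem IsTower.rel {u v : ℕ → ℕ → A.carrier} (hu : IsTower t u) (hv : IsTower t v)
    {S : Rel A} (hS : Compatible A S) (r : ℕ) :
    ∀ j, (∀ i, j < i → i ≤ j + r → S (u 0 i) (v 0 i)) →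
      (∀ i, j ≤ i → i ≤ j + r → S (u 1 i) (v 1 i)) → S (u (r + 1) j) (v (r + 1) j) := by
  induction r using Nat.strong_induction_on with
  | _ r ih =>
    intro j h₀ h₁
    match r, ih with
    | 0, _ => exact h₁ j le_rfl (by omega)
    | 1, _ =>
      rw [hu, hv]
      exact hS.tApp t (h₁ j le_rfl (by omega)) (h₀ (j + 1) (by omega) le_rfl)
        (h₁ (j + 1) (by omega) le_rfl)
    | r + 2, ih =>
      rw [hu, hv]
      exact hS.tApp t
        (ih (r + 1) (by omega) j (fun i hi hi' => h₀ i hi (by omega))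
          (fun i hi hi' => h₁ i hi (by omega)))
        (ih r (by omega) (j + 1) (fun i hi hi' => h₀ i (by omega) (by omega))
          (fun i hi hi' => h₁ i (by omega) (by omega)))
        (ih (r + 1) (by omega) (j + 1) (fun i hi hi' => h₀ i (by omega) (by omega))
          (fun i hi hi' => h₁ i (by omega) (by omega)))

variable {B : ℕ → A.carrier} {S : Rel A}

theorem tower_rel_tower_succ (hSr : ∀ x, S x x) (hS : Compatible A S) {r j : ℕ}
    (hB : ∀ i, j ≤ i → i ≤ j + r → S (B i) (tApp A t (B i) (B (i + 1)) (B (i + 1)))) :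
    S (tower t B B (r + 1) j) (tower t B B (r + 2) j) :=
  (isTower_tower B B).rel (isTower_tower B B).succ_row hS r j (fun i _ _ => hSr (B i)) hB

theorem tower_rel_tower_shift (hSr : ∀ x, S x x) (hS : Compatible A S) {r j : ℕ}
    (hB : ∀ i, j ≤ i → i ≤ j + r → S (B i) (B (i + 1))) :
    S (tower t B B (r + 1) j) (tower t B (fun i => B (i + 1)) (r + 1) j) :=
  (isTower_tower B B).rel (isTower_tower _ _) hS r j (fun i _ _ => hSr (B i)) hB

theorem tower_succ_rel_tower (hSr : ∀ x, S x x) (hS : Compatible A S) {r j : ℕ}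
    (hB : ∀ i, j < i → i ≤ j + r + 1 → S (tApp A t (B i) (B i) (B (i + 1))) (B (i + 1))) :
    S (tower t B (fun i => B (i + 1)) (r + 2) j) (tower t B (fun i => B (i + 1)) (r + 1) (j + 1)) :=
  (isTower_tower _ _).succ_row.rel (isTower_tower _ _).succ_col hS r j
    (fun i _ _ => hSr (B (i + 1))) fun i hi hi' => hB (i + 1) (by omega) (by omega)

theorem compList_tower_succ {S : ℕ → Rel A} {m : ℕ}
    (hS : ∀ k < m, (∀ x, S k x x) ∧ Compatible A (S k))
    (hB : ∀ k < m, ∀ i ≤ k + 1, S k (B i) (tApp A t (B i) (B (i + 1)) (B (i + 1)))) :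
    compList ((List.range m).map S) (tower t B B 2 0) (tower t B B (m + 2) 0) :=
  compList_map_range_of_chain S (fun k => tower t B B (k + 2) 0) m fun k hk =>
    tower_rel_tower_succ (hS k hk).1 (hS k hk).2 fun i _ hi => hB k hk i (by omega)

theorem compList_tower_pred {S : ℕ → Rel A} {m : ℕ}
    (hS : ∀ k < m, (∀ x, S k x x) ∧ Compatible A (S k))
    (hB : ∀ k < m, ∀ i, k < i → i ≤ m + 1 →
      S k (tApp A t (B i) (B i) (B (i + 1))) (B (i + 1))) :
    compList ((List.range m).map S)
      (tower t B (fun i => B (i + 1)) (m + 2) 0) (tower t B (fun i => B (i + 1)) 2 m) := by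
  have := compList_map_range_of_chain S (fun k => tower t B (fun i => B (i + 1)) (m - k + 2) k) m
    fun k hk => by
      rw [show m - (k + 1) + 2 = m - k + 1 by omega]
      exact tower_succ_rel_tower (hS k hk).1 (hS k hk).2 fun i hi hi' => hB k hk i hi (by omega)
  simpa using this

end Paper

open Paper
/-- Theorem 1(xii): for `n ≥ 2`,
`R₁ ∘ ⋯ ∘ Rₙ ⊆ F(R₁) ∘ cl(F(R₁) ∪ F(R₂)) ∘ ⋯ ∘ cl(F(R₁) ∪ ⋯ ∪ F(R_{n-1}))
∘ cl(R₁ ∪ ⋯ ∪ Rₙ) ∘ cl(G(R₂) ∪ ⋯ ∪ G(Rₙ)) ∘ ⋯ ∘ cl(G(R_{n-1}) ∪ G(Rₙ)) ∘ G(Rₙ)`. -/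
theorem stmt11 {σ : Signature} (A : UAAlgebra σ) (F G : Rel A → Rel A)
    (hF : ∀ R, RAdm A R → RAdm A (F R)) (hG : ∀ R, RAdm A R → RAdm A (G R))
    (t : Term σ 3) (ht : MalcevMod A F G t)
    (n : ℕ) (hn : 2 ≤ n) (R : Fin n → Rel A) (hRs : ∀ i, RAdm A (R i)) :
    ∀ a c, compList (List.ofFn R) a c →
      comp (F (R ⟨0, by omega⟩))
        (compList
          (((List.range (n - 2)).map fun k =>
              cl A (fun u v => ∃ i : Fin n, (i : ℕ) ≤ k + 1 ∧ F (R i) u v)) ++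
            [cl A (fun u v => ∃ i : Fin n, R i u v)] ++
            ((List.range (n - 2)).map fun k =>
              cl A (fun u v => ∃ i : Fin n, k + 1 ≤ (i : ℕ) ∧ G (R i) u v)) ++
            [G (R ⟨n - 1, by omega⟩)])) a c := by
  intro a c hac
  obtain ⟨B, rfl, rfl, hB⟩ := exists_chain_of_compList n R a c hac
  have hFB (i) (h : i < n) := (ht _ (hRs ⟨i, h⟩) _ _ (hB i h)).1
  have hGB (i) (h : i < n) := (ht _ (hRs ⟨i, h⟩) _ _ (hB i h)).2
  obtain ⟨m, rfl⟩ : ∃ m, n = m + 2 := ⟨n - 2, by omega⟩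
  refine ⟨tower t B B 2 0, hFB 0 _, ?_⟩
  refine compList_append_of_comp ⟨tower t B (fun i => B (i + 1)) 2 m, ?_, _, hGB (m + 1) _, rfl⟩
  refine compList_append_of_comp ⟨tower t B (fun i => B (i + 1)) (m + 2) 0, ?_, ?_⟩
  refine compList_append_of_comp ⟨tower t B B (m + 2) 0, ?_, _, ?_, rfl⟩
  · refine compList_tower_succ (fun k _ => ⟨cl_refl fun x => ?_, cl_compatible _⟩)
      fun k hk i hi => cl_of_rel ⟨⟨i, by omega⟩, hi, hFB i _⟩
    exact ⟨0, Nat.zero_le _, (hF _ (hRs 0)).1 x⟩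
  · exact tower_rel_tower_shift (cl_refl fun x => ⟨0, (hRs 0).1 x⟩) (cl_compatible _)
      fun i _ hi => cl_of_rel ⟨⟨i, by omega⟩, hB i _⟩
  · refine compList_tower_pred (fun k _ => ⟨cl_refl fun x => ?_, cl_compatible _⟩)
      fun k hk i hi _ => cl_of_rel ⟨⟨i, by omega⟩, hi, hGB i _⟩
    exact ⟨Fin.last _, by simp only [Fin.val_last]; omega, (hG _ (hRs _)).1 x⟩
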